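/- Let J ≥ 2 be an integer, P₁, …, P_J > 0 real numbers, and λ ≥ 0 a real number. Then the infimum of h(λ, K) over all J×J real positive semidefinite matrices K with 0 < K_{jj} ≤ P_j for all j equals the infimum of h(λ, K) over all J×J real positive semidefinite matrices K with K_{jj} = P_j for all j. -/

import Mathlib

open Finset
open Matrix

/-- The function `h(λ, K)` from the dependence-balance bound:
`h(λ, K) = ((λ−1)/2)·log(1 + Σ_{j,k} K_{jk})
  − (λ/(2(J−1)))·Σ_j log(1 + Σ_{ℓ,k} K_{ℓk} − (Σ_k K_{jk})²/K_{jj})`. -/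
noncomputable def hFun (J : ℕ) (lam : ℝ) (K : Matrix (Fin J) (Fin J) ℝ) : ℝ :=
  ((lam - 1) / 2) * Real.log (1 + ∑ l : Fin J, ∑ k : Fin J, K l k)
    - (lam / (2 * ((J : ℝ) - 1))) *
      ∑ j : Fin J, Real.log (1 + (∑ l : Fin J, ∑ k : Fin J, K l k)
        - (∑ k : Fin J, K j k) ^ 2 / K j j)

lemma star_vec {J : ℕ} (x : Fin J → ℝ) : star x = x := by
  funext i; simp

lemma symm_entries {J : ℕ} {K : Matrix (Fin J) (Fin J) ℝ} (hK : K.PosSemidef) (i k : Fin J) :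
    K k i = K i k := by
  have := congrFun (congrFun hK.1 i) k
  simpa [Matrix.conjTranspose_apply] using this

lemma sumsum_nonneg {J : ℕ} {K : Matrix (Fin J) (Fin J) ℝ} (hK : K.PosSemidef) :
    0 ≤ ∑ l : Fin J, ∑ k : Fin J, K l k := by
  have h := hK.dotProduct_mulVec_nonneg (fun _ => (1:ℝ))
  simpa [dotProduct, Matrix.mulVec] using h

lemma row_sq_le {J : ℕ} {K : Matrix (Fin J) (Fin J) ℝ} (hK : K.PosSemidef) (j : Fin J) :
    (∑ k : Fin J, K j k) ^ 2 ≤ K j j * (∑ l : Fin J, ∑ k : Fin J, K l k) := by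
  set S := ∑ l : Fin J, ∑ k : Fin J, K l k with hS
  set r := ∑ k : Fin J, K j k with hr
  have key : ∀ t : ℝ, 0 ≤ S * (t * t) + (2 * r) * t + K j j := by
    intro t
    set e : Fin J → ℝ := Pi.single j 1 with he
    set u : Fin J → ℝ := fun _ => t with hu
    have h := hK.dotProduct_mulVec_nonneg (e + u)
    have e1 : e ⬝ᵥ (K *ᵥ e) = K j j := by
      simp [he, single_dotProduct, Matrix.mulVec_single]
    have e2 : e ⬝ᵥ (K *ᵥ u) = t * r := by
      rw [he, single_dotProduct, one_mul]
      simp only [hu, Matrix.mulVec, dotProduct]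
      rw [hr, Finset.mul_sum]
      exact Finset.sum_congr rfl fun k _ => mul_comm _ _
    have e3 : u ⬝ᵥ (K *ᵥ e) = t * r := by
      simp only [hu, he, Matrix.mulVec_single_one, Matrix.col_apply, dotProduct, mul_one]
      rw [hr, Finset.mul_sum]
      exact Finset.sum_congr rfl fun i _ => by rw [symm_entries hK j i]
    have e4 : u ⬝ᵥ (K *ᵥ u) = t * (S * t) := by
      simp only [hu, dotProduct, Matrix.mulVec]
      rw [hS, Finset.sum_mul, Finset.mul_sum]
      exact Finset.sum_congr rfl fun i _ => by rw [Finset.sum_mul]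
    rw [_root_.star_vec] at h
    rw [Matrix.mulVec_add, dotProduct_add, add_dotProduct,
      add_dotProduct, e1, e2, e3, e4] at h
    nlinarith [h]
  have hd := discrim_le_zero key
  rw [discrim] at hd
  nlinarith [hd]

lemma entry_le {J : ℕ} {K : Matrix (Fin J) (Fin J) ℝ} (hK : K.PosSemidef) (i k : Fin J) :
    K i k ≤ (K i i + K k k) / 2 := by
  rcases eq_or_ne i k with rfl | h
  · linarith []
  · have hq := hK.dotProduct_mulVec_nonneg ((Pi.single i 1 : Fin J → ℝ) - Pi.single k 1)
    rw [_root_.star_vec, Matrix.mulVec_sub, dotProduct_sub, sub_dotProduct,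
      sub_dotProduct, Matrix.mulVec_single_one, Matrix.mulVec_single_one] at hq
    simp only [Matrix.col_apply, dotProduct, Pi.single_apply, mul_one, ite_mul, one_mul, zero_mul,
      Finset.sum_ite_eq', Finset.mem_univ, if_true] at hq
    have hik := symm_entries hK i k
    nlinarith [hq]

lemma step_lemma {J : ℕ} (hJ : 2 ≤ J) {lam : ℝ} (hlam : 0 ≤ lam)
    {K : Matrix (Fin J) (Fin J) ℝ} (hK : K.PosSemidef) (hKd : ∀ i, 0 < K i i)
    (j : Fin J) {d : ℝ} (hd : 0 ≤ d) :
    hFun J lam (K + Matrix.diagonal (fun i => if i = j then d else 0)) ≤ hFun J lam K := by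
  have hJ1 : (1:ℝ) ≤ (J:ℝ) - 1 := by
    have : (2:ℝ) ≤ (J:ℝ) := by exact_mod_cast hJ
    linarith
  set K' := K + Matrix.diagonal (fun i => if i = j then d else 0) with hK'
  set S := ∑ l : Fin J, ∑ k : Fin J, K l k with hSdef
  set r : Fin J → ℝ := fun i => ∑ k : Fin J, K i k with hrdef
  have hrow' : ∀ i, (∑ k : Fin J, K' i k) = r i + (if i = j then d else 0) := by
    intro i
    simp only [hK', Matrix.add_apply, Matrix.diagonal_apply, Finset.sum_add_distrib,
      Finset.sum_ite_eq, Finset.mem_univ, if_true, hrdef]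
  have hdiag' : ∀ i, K' i i = K i i + (if i = j then d else 0) := by
    intro i; simp [hK', Matrix.diagonal_apply_eq]
  have hS' : (∑ l : Fin J, ∑ k : Fin J, K' l k) = S + d := by
    rw [Finset.sum_congr rfl fun i _ => hrow' i, Finset.sum_add_distrib, hSdef]
    simp [hrdef]
  have hS0 : 0 ≤ S := sumsum_nonneg hK
  have hA1 : ∀ i, (1:ℝ) ≤ 1 + S - (r i) ^ 2 / K i i := by
    intro i
    have h1 := row_sq_le hK i
    have h2 : (r i) ^ 2 / K i i ≤ S := by
      rw [div_le_iff₀ (hKd i)]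
      calc (r i)^2 ≤ K i i * S := h1
        _ = S * K i i := mul_comm _ _
    linarith
  have hA2 : ∀ i, 1 + S - (r i) ^ 2 / K i i ≤ 1 + S := by
    intro i
    have : 0 ≤ (r i)^2 / K i i := div_nonneg (sq_nonneg _) (hKd i).le
    linarith
  -- rewrite the goal
  unfold hFun
  rw [hS']
  simp only [hrow', hdiag']
  set L := Real.log (1 + (S + d)) - Real.log (1 + S) with hL
  have hLpos : 0 ≤ L := by
    have := Real.log_le_log (by linarith : (0:ℝ) < 1 + S) (by linarith : 1 + S ≤ 1 + (S + d))
    linarith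
  have hterm : ∀ i : Fin J,
      Real.log (1 + S - (r i) ^ 2 / K i i) + (if i = j then 0 else L)
        ≤ Real.log (1 + (S + d) - (r i + (if i = j then d else 0)) ^ 2 / (K i i + (if i = j then d else 0))) := by
    intro i
    rcases eq_or_ne i j with rfl | hij
    · simp only [eq_self_iff_true, if_true, add_zero]
      apply Real.log_le_log (by linarith [hA1 i])
      -- 1 + S - r^2/K ≤ 1 + (S+d) - (r+d)^2/(K+d)
      have hKi := hKd i
      have hKid : 0 < K i i + d := by linarith
      have key : (r i + d) ^ 2 / (K i i + d) ≤ (r i) ^ 2 / K i i + d := by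
        rw [div_le_iff₀ hKid]
        have expand : ((r i)^2 / K i i) * K i i = (r i)^2 :=
          div_mul_cancel₀ _ (hKd i).ne'
        nlinarith [sq_nonneg (K i i - r i), mul_pos hKi hKid,
          div_nonneg (sq_nonneg (r i)) hKi.le, expand, hKd i, hd]
      linarith
    · simp only [if_neg hij, add_zero]
      -- log A + L ≤ log (A + d)
      have hApos : (0:ℝ) < 1 + S - (r i)^2 / K i i := by linarith [hA1 i]
      rw [hL]
      have h1 : Real.log (1 + (S + d)) + Real.log (1 + S - (r i)^2 / K i i)
          ≤ Real.log (1 + S) + Real.log (1 + (S + d) - (r i)^2 / K i i) := by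
        rw [← Real.log_mul (by linarith) (by linarith), ← Real.log_mul (by linarith) (by linarith)]
        apply Real.log_le_log (by nlinarith)
        nlinarith [hA2 i]
      linarith
  have hsum : (∑ i : Fin J, Real.log (1 + S - (r i) ^ 2 / K i i)) + ((J:ℝ) - 1) * L
      ≤ ∑ i : Fin J, Real.log (1 + (S + d) - (r i + (if i = j then d else 0)) ^ 2 / (K i i + (if i = j then d else 0))) := by
    have h1 := Finset.sum_le_sum (fun i (_ : i ∈ Finset.univ) => hterm i)
    rw [Finset.sum_add_distrib] at h1
    have h2 : (∑ i : Fin J, (if i = j then (0:ℝ) else L)) = (J:ℝ) * L - L := by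
      have : (∑ i : Fin J, (if i = j then (0:ℝ) else L))
          = ∑ i : Fin J, (L - if i = j then L else 0) := by
        refine Finset.sum_congr rfl fun i _ => ?_
        split <;> ring
      rw [this, Finset.sum_sub_distrib, Finset.sum_ite_eq', Finset.sum_const]
      simp [mul_comm]
    rw [h2] at h1
    linarith
  have hc : 0 ≤ lam / (2 * ((J:ℝ) - 1)) := by positivity
  have hcJ : lam / (2 * ((J:ℝ) - 1)) * (((J:ℝ) - 1) * L) = (lam / 2) * L := by
    field_simp
  have hmul := mul_le_mul_of_nonneg_left hsum hc
  rw [mul_add, hcJ] at hmul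
  have hlog' : Real.log (1 + (S + d)) = Real.log (1 + S) + L := by rw [hL]; ring
  rw [hlog']
  nlinarith [hmul, hLpos, hlam]

lemma hFun_add_diagonal {J : ℕ} (hJ : 2 ≤ J) {lam : ℝ} (hlam : 0 ≤ lam)
    {K : Matrix (Fin J) (Fin J) ℝ} (hK : K.PosSemidef) (hKd : ∀ i, 0 < K i i)
    (d : Fin J → ℝ) (hd : ∀ i, 0 ≤ d i) :
    hFun J lam (K + Matrix.diagonal d) ≤ hFun J lam K := by
  have main : ∀ s : Finset (Fin J),
      hFun J lam (K + Matrix.diagonal (fun i => if i ∈ s then d i else 0)) ≤ hFun J lam K := by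
    intro s
    induction s using Finset.induction_on with
    | empty => simp
    | @insert j s hj ih =>
      have hfun : (fun i => if i ∈ insert j s then d i else 0)
          = fun i => (if i ∈ s then d i else 0) + (if i = j then d j else 0) := by
        funext i
        by_cases h1 : i = j
        · subst h1; simp [hj]
        · by_cases h2 : i ∈ s <;> simp [h1, h2, Finset.mem_insert]
      have hKs : (K + Matrix.diagonal (fun i => if i ∈ s then d i else 0)).PosSemidef :=
        hK.add (Matrix.PosSemidef.diagonal (fun i => by
          dsimp only; split
          · exact hd i
          · exact le_refl 0))
      have hKsd : ∀ i, 0 < (K + Matrix.diagonal fun i => if i ∈ s then d i else 0) i i := by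
        intro i
        simp only [Matrix.add_apply, Matrix.diagonal_apply_eq]
        have := hKd i
        split
        · linarith [hd i]
        · linarith
      calc hFun J lam (K + Matrix.diagonal fun i => if i ∈ insert j s then d i else 0)
          = hFun J lam ((K + Matrix.diagonal fun i => if i ∈ s then d i else 0)
              + Matrix.diagonal fun i => if i = j then d j else 0) := by
            rw [hfun, ← Matrix.diagonal_add, ← add_assoc]
        _ ≤ hFun J lam (K + Matrix.diagonal fun i => if i ∈ s then d i else 0) :=
            step_lemma hJ hlam hKs hKsd j (hd j)
        _ ≤ hFun J lam K := ih
  have h := main Finset.univ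
  simpa using h

lemma hFun_lower_bound {J : ℕ} (hJ : 2 ≤ J) {lam : ℝ} (hlam : 0 ≤ lam) (P : Fin J → ℝ)
    {K : Matrix (Fin J) (Fin J) ℝ} (hK : K.PosSemidef)
    (hc : ∀ i, 0 < K i i ∧ K i i ≤ P i) :
    -(|lam - 1| / 2) * Real.log (1 + (J:ℝ) * ∑ i, P i)
      - (lam / (2 * ((J:ℝ) - 1))) * ((J:ℝ) * Real.log (1 + (J:ℝ) * ∑ i, P i))
      ≤ hFun J lam K := by
  have hJ1 : (1:ℝ) ≤ (J:ℝ) - 1 := by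
    have : (2:ℝ) ≤ (J:ℝ) := by exact_mod_cast hJ
    linarith
  set B := (J:ℝ) * ∑ i, P i with hB
  set M := Real.log (1 + B) with hM
  set S := ∑ l : Fin J, ∑ k : Fin J, K l k with hS
  have hS0 : 0 ≤ S := sumsum_nonneg hK
  have hSB : S ≤ B := by
    have h1 : S ≤ ∑ l : Fin J, ∑ k : Fin J, (K l l + K k k) / 2 :=
      Finset.sum_le_sum fun l _ => Finset.sum_le_sum fun k _ => entry_le hK l k
    have h2 : (∑ l : Fin J, ∑ k : Fin J, (K l l + K k k) / 2) = (J:ℝ) * ∑ l : Fin J, K l l := by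
      simp only [add_div, Finset.sum_add_distrib, Finset.sum_const, Finset.card_univ,
        Fintype.card_fin, nsmul_eq_mul, ← Finset.sum_div, ← Finset.mul_sum]
      ring
    have h3 : (∑ l : Fin J, K l l) ≤ ∑ i, P i :=
      Finset.sum_le_sum fun i _ => (hc i).2
    have hJ0 : (0:ℝ) ≤ (J:ℝ) := Nat.cast_nonneg J
    calc S ≤ (J:ℝ) * ∑ l : Fin J, K l l := by rw [← h2]; exact h1
      _ ≤ B := by rw [hB]; exact mul_le_mul_of_nonneg_left h3 hJ0
  have hM0 : 0 ≤ M := Real.log_nonneg (by linarith)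
  have hlog1 : Real.log (1 + S) ≤ M := Real.log_le_log (by linarith) (by linarith)
  have hlog0 : 0 ≤ Real.log (1 + S) := Real.log_nonneg (by linarith)
  have hAi : ∀ i : Fin J, 0 ≤ Real.log (1 + S - (∑ k, K i k) ^ 2 / K i i) ∧
      Real.log (1 + S - (∑ k, K i k) ^ 2 / K i i) ≤ M := by
    intro i
    have h1 := row_sq_le hK i
    have hKi := (hc i).1
    have h2 : (∑ k, K i k) ^ 2 / K i i ≤ S := by
      rw [div_le_iff₀ hKi]
      calc (∑ k, K i k)^2 ≤ K i i * S := h1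
        _ = S * K i i := mul_comm _ _
    have h3 : 0 ≤ (∑ k, K i k) ^ 2 / K i i := div_nonneg (sq_nonneg _) hKi.le
    constructor
    · exact Real.log_nonneg (by linarith)
    · exact Real.log_le_log (by linarith) (by linarith)
  have hsum0 : 0 ≤ ∑ i : Fin J, Real.log (1 + S - (∑ k, K i k) ^ 2 / K i i) :=
    Finset.sum_nonneg fun i _ => (hAi i).1
  have hsumM : (∑ i : Fin J, Real.log (1 + S - (∑ k, K i k) ^ 2 / K i i)) ≤ (J:ℝ) * M := by
    calc (∑ i : Fin J, Real.log (1 + S - (∑ k, K i k) ^ 2 / K i i))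
        ≤ ∑ _i : Fin J, M := Finset.sum_le_sum fun i _ => (hAi i).2
      _ = (J:ℝ) * M := by simp [Finset.sum_const, Finset.card_univ, nsmul_eq_mul]
  have hcnn : 0 ≤ lam / (2 * ((J:ℝ) - 1)) := by positivity
  have term1 : -(|lam - 1| / 2) * M ≤ ((lam - 1) / 2) * Real.log (1 + S) := by
    rcases le_or_gt 0 (lam - 1) with h | h
    · have := mul_nonneg (by linarith : (0:ℝ) ≤ (lam-1)/2) hlog0
      have habs : |lam - 1| = lam - 1 := abs_of_nonneg h
      nlinarith [hM0]
    · have habs : |lam - 1| = -(lam - 1) := abs_of_neg h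
      rw [habs]
      have := mul_le_mul_of_nonpos_left hlog1 (by linarith : (lam - 1)/2 ≤ 0)
      linarith
  have term2 : (lam / (2 * ((J:ℝ) - 1))) *
      (∑ i : Fin J, Real.log (1 + S - (∑ k, K i k) ^ 2 / K i i))
      ≤ (lam / (2 * ((J:ℝ) - 1))) * ((J:ℝ) * M) :=
    mul_le_mul_of_nonneg_left hsumM hcnn
  unfold hFun
  rw [← hS]
  linarith

/-- Let `J ≥ 2`, `P_j > 0`, `λ ≥ 0`. The infimum of `h(λ, K)` over positive
semidefinite `K` with `0 < K_{jj} ≤ P_j` equals the infimum over positive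
semidefinite `K` with `K_{jj} = P_j`. -/
theorem stmt_9 (J : ℕ) (hJ : 2 ≤ J) (P : Fin J → ℝ) (hP : ∀ j, 0 < P j)
    (lam : ℝ) (hlam : 0 ≤ lam) :
    sInf ((fun K : Matrix (Fin J) (Fin J) ℝ => hFun J lam K) ''
        {K : Matrix (Fin J) (Fin J) ℝ | K.PosSemidef ∧ ∀ j, 0 < K j j ∧ K j j ≤ P j})
      = sInf ((fun K : Matrix (Fin J) (Fin J) ℝ => hFun J lam K) ''
        {K : Matrix (Fin J) (Fin J) ℝ | K.PosSemidef ∧ ∀ j, K j j = P j}) := by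
  set f := fun K : Matrix (Fin J) (Fin J) ℝ => hFun J lam K with hf
  set A := f '' {K : Matrix (Fin J) (Fin J) ℝ | K.PosSemidef ∧ ∀ j, 0 < K j j ∧ K j j ≤ P j}
    with hA
  set B := f '' {K : Matrix (Fin J) (Fin J) ℝ | K.PosSemidef ∧ ∀ j, K j j = P j} with hBs
  have hsub : B ⊆ A := by
    apply Set.image_mono
    rintro K ⟨h1, h2⟩
    exact ⟨h1, fun j => by rw [h2 j]; exact ⟨hP j, le_refl _⟩⟩
  have hdiagP : (Matrix.diagonal P) ∈
      {K : Matrix (Fin J) (Fin J) ℝ | K.PosSemidef ∧ ∀ j, K j j = P j} :=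
    ⟨Matrix.PosSemidef.diagonal (fun i => (hP i).le), fun j => Matrix.diagonal_apply_eq _ _⟩
  have hBne : B.Nonempty := ⟨f (Matrix.diagonal P), ⟨_, hdiagP, rfl⟩⟩
  have hAne : A.Nonempty := hBne.mono hsub
  have hbddA : BddBelow A := by
    refine ⟨-(|lam - 1| / 2) * Real.log (1 + (J:ℝ) * ∑ i, P i)
      - (lam / (2 * ((J:ℝ) - 1))) * ((J:ℝ) * Real.log (1 + (J:ℝ) * ∑ i, P i)), ?_⟩
    rintro x ⟨K, ⟨h1, h2⟩, rfl⟩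
    exact hFun_lower_bound hJ hlam P h1 h2
  have hbddB : BddBelow B := hbddA.mono hsub
  apply le_antisymm
  · exact csInf_le_csInf hbddA hBne hsub
  · refine le_csInf hAne ?_
    rintro x ⟨K, ⟨hKpsd, hKc⟩, rfl⟩
    have hd : ∀ i, 0 ≤ P i - K i i := fun i => sub_nonneg.2 (hKc i).2
    have hmem : (K + Matrix.diagonal (fun i => P i - K i i)) ∈
        {K : Matrix (Fin J) (Fin J) ℝ | K.PosSemidef ∧ ∀ j, K j j = P j} := by
      refine ⟨hKpsd.add (Matrix.PosSemidef.diagonal hd), fun j => ?_⟩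
      simp only [Matrix.add_apply, Matrix.diagonal_apply_eq]
      ring
    calc sInf B ≤ f (K + Matrix.diagonal fun i => P i - K i i) := csInf_le hbddB ⟨_, hmem, rfl⟩
      _ ≤ f K := hFun_add_diagonal hJ hlam hKpsd (fun i => (hKc i).1) _ hd
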